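/- Let T = (T_1, ..., T_d) be a d-tuple of n×n complex matrices with spherical polar decomposition T_i = V_i P, where Σ V_i*V_i ≤ I. Then the spherical Duggal transform satisfies ‖T^D‖_{s,2} ≤ √n ‖T‖_{s,2}. -/

import Mathlib

open scoped Matrix ComplexOrder

/-- Real power of a matrix via the continuous functional calculus (for Hermitian matrices). -/
noncomputable def mpow {m : Type*} [Fintype m] [DecidableEq m]
    (A : Matrix m m ℂ) (t : ℝ) : Matrix m m ℂ :=
  cfc (fun x : ℝ => x ^ t) A

/-- The operator (spectral) norm of a matrix. -/
noncomputable def opNorm {m : Type*} [Fintype m] [DecidableEq m] (A : Matrix m m ℂ) : ℝ :=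
  ‖Matrix.toEuclideanCLM (𝕜 := ℂ) A‖

/-- The Schatten `p`-norm of a matrix: `(tr |A|^p)^{1/p}`. -/
noncomputable def schattenNorm {m : Type*} [Fintype m] [DecidableEq m]
    (p : ℝ) (A : Matrix m m ℂ) : ℝ :=
  ((mpow (Aᴴ * A) (p / 2)).trace.re) ^ (1 / p)

/-- The spherical Schatten `p`-norm of a tuple: `(tr (∑ S_i* S_i)^{p/2})^{1/p}`. -/
noncomputable def sphSchattenNorm {m : Type*} [Fintype m] [DecidableEq m] {d : ℕ}
    (p : ℝ) (T : Fin d → Matrix m m ℂ) : ℝ :=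
  ((mpow (∑ i, (T i)ᴴ * T i) (p / 2)).trace.re) ^ (1 / p)

/-! For `p = 2` the spherical Schatten norm is `√(tr ∑ Sᵢᴴ Sᵢ)`, and the terms of the Duggal
transform satisfy `(P Vᵢ)ᴴ (P Vᵢ) = Vᵢᴴ P² Vᵢ`. Writing the positive matrix `P²` as `Cᴴ C`,
submultiplicativity of the Frobenius norm gives `tr (Vᵢᴴ P² Vᵢ) = ‖C Vᵢ‖² ≤ tr P² · tr (Vᵢᴴ Vᵢ)`.
Summing over `i`, the contraction condition `∑ Vᵢᴴ Vᵢ ≤ 1` bounds `tr ∑ Vᵢᴴ Vᵢ` by `n`, while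
`tr P² = ‖T‖²_{s,2}`. -/

namespace Matrix

variable {m n ι : Type*} [Fintype m] [Fintype n] [Fintype ι]

section Frobenius

attribute [local instance] Matrix.frobeniusSeminormedAddCommGroup

lemma re_trace_conjTranspose_mul_self (A : Matrix m n ℂ) :
    (Aᴴ * A).trace.re = ‖A‖ ^ 2 := by
  rw [frobenius_norm_def, ← Real.sqrt_eq_rpow, Real.sq_sqrt (by positivity), Finset.sum_comm]
  simp only [trace, diag, mul_apply, conjTranspose_apply, Complex.re_sum, Real.rpow_two,
    Complex.sq_norm, Complex.normSq_apply, Complex.mul_re, Complex.star_def, Complex.conj_re,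
    Complex.conj_im]
  ring_nf

lemma PosSemidef.re_trace_conjTranspose_mul_mul_le {Q : Matrix n n ℂ} (hQ : Q.PosSemidef)
    (V : Matrix n m ℂ) : (Vᴴ * Q * V).trace.re ≤ Q.trace.re * (Vᴴ * V).trace.re := by
  classical
  obtain ⟨C, rfl⟩ : ∃ C : Matrix n n ℂ, Q = Cᴴ * C := by
    open scoped MatrixOrder Norms.L2Operator in
    exact CStarAlgebra.nonneg_iff_eq_star_mul_self.mp hQ.nonneg
  have hconj : Vᴴ * (Cᴴ * C) * V = (C * V)ᴴ * (C * V) := by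
    simp only [conjTranspose_mul, Matrix.mul_assoc]
  rw [hconj, re_trace_conjTranspose_mul_self, re_trace_conjTranspose_mul_self,
    re_trace_conjTranspose_mul_self, ← mul_pow]
  gcongr
  exact frobenius_norm_mul C V

end Frobenius

lemma PosSemidef.re_trace_nonneg {A : Matrix n n ℂ} (hA : A.PosSemidef) : 0 ≤ A.trace.re :=
  (Complex.nonneg_iff.mp hA.trace_nonneg).1

lemma PosSemidef.re_trace_sum_conjTranspose_mul_mul_le {Q : Matrix n n ℂ} (hQ : Q.PosSemidef)
    (V : ι → Matrix n m ℂ) :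
    (∑ i, (V i)ᴴ * Q * V i).trace.re ≤ Q.trace.re * (∑ i, (V i)ᴴ * V i).trace.re := by
  simp only [trace_sum, Complex.re_sum, Finset.mul_sum]
  exact Finset.sum_le_sum fun i _ ↦ hQ.re_trace_conjTranspose_mul_mul_le (V i)

lemma re_trace_le_card_of_posSemidef_one_sub [DecidableEq n] {A : Matrix n n ℂ}
    (hA : (1 - A).PosSemidef) : A.trace.re ≤ Fintype.card n := by
  have := hA.re_trace_nonneg
  simp only [trace_sub, trace_one, Complex.sub_re, Complex.natCast_re] at this
  linarith

end Matrix

open Matrix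

lemma mpow_one {m : Type*} [Fintype m] [DecidableEq m] {A : Matrix m m ℂ} (hA : A.IsHermitian) :
    mpow A 1 = A := by
  simp only [mpow, Real.rpow_one]
  exact cfc_id' ℝ A

lemma sphSchattenNorm_two_eq {m : Type*} [Fintype m] [DecidableEq m] {d : ℕ}
    (S : Fin d → Matrix m m ℂ) :
    sphSchattenNorm 2 S = √(∑ i, (S i)ᴴ * S i).trace.re := by
  rw [sphSchattenNorm, div_self two_ne_zero,
    mpow_one (posSemidef_sum _ fun i _ ↦ posSemidef_conjTranspose_mul_self (S i)).isHermitian,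
    Real.sqrt_eq_rpow]

theorem sphSchattenNorm_two_duggal_le_general {n d : ℕ}
    (T V : Fin d → Matrix (Fin n) (Fin n) ℂ) (P : Matrix (Fin n) (Fin n) ℂ)
    (hP : P.PosSemidef) (hP2 : P * P = ∑ i, (T i)ᴴ * T i)
    (hV : ((1 : Matrix (Fin n) (Fin n) ℂ) - ∑ i, (V i)ᴴ * V i).PosSemidef) :
    sphSchattenNorm 2 (fun i => P * V i) ≤ Real.sqrt n * sphSchattenNorm 2 T := by
  have hPP : (P * P).PosSemidef := by
    simpa [hP.isHermitian.eq] using posSemidef_conjTranspose_mul_self P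
  have hconj (i : Fin d) : (P * V i)ᴴ * (P * V i) = (V i)ᴴ * (P * P) * V i := by
    simp only [conjTranspose_mul, hP.isHermitian.eq, Matrix.mul_assoc]
  rw [sphSchattenNorm_two_eq, sphSchattenNorm_two_eq, ← hP2, ← Real.sqrt_mul (Nat.cast_nonneg n)]
  refine Real.sqrt_le_sqrt ?_
  simp only [hconj]
  calc _ ≤ (P * P).trace.re * (∑ i, (V i)ᴴ * V i).trace.re :=
        hPP.re_trace_sum_conjTranspose_mul_mul_le V
    _ ≤ (P * P).trace.re * n := by
        gcongr
        · exact hPP.re_trace_nonneg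
        · simpa using re_trace_le_card_of_posSemidef_one_sub hV
    _ = n * (P * P).trace.re := mul_comm _ _

/-- The spherical Duggal transform of a tuple of `n × n` matrices satisfies
`‖T^D‖_{s,2} ≤ √n ‖T‖_{s,2}`. -/
theorem sphSchattenNorm_two_duggal_le {n d : ℕ}
    (T V : Fin d → Matrix (Fin n) (Fin n) ℂ) (P : Matrix (Fin n) (Fin n) ℂ)
    (hP : P.PosSemidef) (hP2 : P * P = ∑ i, (T i)ᴴ * T i)
    (hT : ∀ i, T i = V i * P)
    (hV : ((1 : Matrix (Fin n) (Fin n) ℂ) - ∑ i, (V i)ᴴ * V i).PosSemidef) :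
    sphSchattenNorm 2 (fun i => P * V i) ≤ Real.sqrt n * sphSchattenNorm 2 T :=
  sphSchattenNorm_two_duggal_le_general T V P hP hP2 hV
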